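/- arXiv:0810.1352 — 9 statements merged into one kernel-verified Lean document; each statement's English description precedes it below -/
import Mathlib

section
/- Define F : ℂ² → ℝ³ by F(z,w) = (1/4)(|z|² − |w|², 2·Re(w·conj z), 2·Im(w·conj z)). For every 3×3 real matrix R with Rᵀ·R = 1 and det R = 1, there exists a 2×2 complex matrix g with g·g* = 1 and det g = 1 such that for all v ∈ ℂ², F(g·v) = R·(F v). -/
/-!
By Euler angles every rotation is `rotX α * rotZ β * rotX γ`, with `rotX`, `rotZ` the rotations
about the first and third coordinate axes. Each of these lifts explicitly to `SU(2)`: the phase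
matrix `diag(e^{-it/2}, e^{it/2})` covers the rotation by `t` about the first axis, and the real
rotation by `t/2` covers the rotation by `t` about the third axis. Covering is multiplicative, so
the product of the three lifts covers `R`.
-/

/-- The (scaled) Hopf map `F : ℂ² → ℝ³` on column vectors,
`F(z,w) = (1/4)(|z|² − |w|², 2·Re(w·conj z), 2·Im(w·conj z))`. -/
noncomputable def hopfF (v : Fin 2 → ℂ) : Fin 3 → ℝ :=
  ![(‖v 0‖ ^ 2 - ‖v 1‖ ^ 2) / 4,
    2 * (v 1 * (starRingEnd ℂ) (v 0)).re / 4,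
    2 * (v 1 * (starRingEnd ℂ) (v 0)).im / 4]

open Real Matrix

theorem exists_cos_eq_and_sin_eq {a b : ℝ} (h : a ^ 2 + b ^ 2 = 1) :
    ∃ t, cos t = a ∧ sin t = b := by
  have hnorm : ‖(⟨a, b⟩ : ℂ)‖ = 1 := by
    rw [Complex.norm_def, Complex.normSq_mk, ← sq, ← sq, h, sqrt_one]
  refine ⟨Complex.arg ⟨a, b⟩, ?_, ?_⟩
  · simpa [hnorm] using Complex.norm_mul_cos_arg ⟨a, b⟩
  · simpa [hnorm] using Complex.norm_mul_sin_arg ⟨a, b⟩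

theorem exists_spherical_coords {a b c : ℝ} (h : a ^ 2 + b ^ 2 + c ^ 2 = 1) :
    ∃ α β, cos β = a ∧ cos α * sin β = b ∧ sin α * sin β = c := by
  set r := ‖(⟨b, c⟩ : ℂ)‖
  have hr : r ^ 2 = b ^ 2 + c ^ 2 := by
    rw [Complex.sq_norm, Complex.normSq_mk, sq, sq]
  obtain ⟨β, hcos, hsin⟩ := exists_cos_eq_and_sin_eq (a := a) (b := r) (by linarith)
  refine ⟨Complex.arg ⟨b, c⟩, β, hcos, ?_, ?_⟩
  · rw [hsin, mul_comm]; exact Complex.norm_mul_cos_arg _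
  · rw [hsin, mul_comm]; exact Complex.norm_mul_sin_arg _

noncomputable def rotX (t : ℝ) : Matrix (Fin 3) (Fin 3) ℝ :=
  !![1, 0, 0; 0, cos t, -sin t; 0, sin t, cos t]

noncomputable def rotZ (t : ℝ) : Matrix (Fin 3) (Fin 3) ℝ :=
  !![cos t, -sin t, 0; sin t, cos t, 0; 0, 0, 1]

theorem rotX_mem_specialOrthogonalGroup (t : ℝ) :
    rotX t ∈ specialOrthogonalGroup (Fin 3) ℝ := by
  have h := sin_sq_add_cos_sq t
  refine mem_specialOrthogonalGroup_iff.mpr ⟨(mem_orthogonalGroup_iff _ _).mpr ?_, ?_⟩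
  · ext i j
    fin_cases i <;> fin_cases j <;>
      simp only [rotX, mul_apply, transpose_apply, Fin.sum_univ_three, one_fin_three, of_apply,
        cons_val', cons_val_zero, cons_val_one, cons_val, cons_val_fin_one, Fin.isValue,
        Fin.zero_eta, Fin.mk_one, Fin.reduceFinMk] <;>
      grind
  · rw [det_fin_three]
    simp only [rotX, of_apply, cons_val', cons_val_zero, cons_val_one, cons_val, cons_val_fin_one,
      Fin.isValue]
    grind

theorem rotZ_mem_specialOrthogonalGroup (t : ℝ) :
    rotZ t ∈ specialOrthogonalGroup (Fin 3) ℝ := by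
  have h := sin_sq_add_cos_sq t
  refine mem_specialOrthogonalGroup_iff.mpr ⟨(mem_orthogonalGroup_iff _ _).mpr ?_, ?_⟩
  · ext i j
    fin_cases i <;> fin_cases j <;>
      simp only [rotZ, mul_apply, transpose_apply, Fin.sum_univ_three, one_fin_three, of_apply,
        cons_val', cons_val_zero, cons_val_one, cons_val, cons_val_fin_one, Fin.isValue,
        Fin.zero_eta, Fin.mk_one, Fin.reduceFinMk] <;>
      grind
  · rw [det_fin_three]
    simp only [rotZ, of_apply, cons_val', cons_val_zero, cons_val_one, cons_val, cons_val_fin_one,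
      Fin.isValue]
    grind

theorem exists_eq_rotX_of_apply_zero_zero_eq_one {Q : Matrix (Fin 3) (Fin 3) ℝ}
    (hQ : Q ∈ specialOrthogonalGroup (Fin 3) ℝ) (h00 : Q 0 0 = 1) : ∃ t, Q = rotX t := by
  obtain ⟨hQ, hdet⟩ := mem_specialOrthogonalGroup_iff.mp hQ
  have hrow : ∀ i j, ∑ k, Q i k * Q j k = if i = j then 1 else 0 := fun i j => by
    simpa [mul_apply, one_apply] using
      congrFun (congrFun ((mem_orthogonalGroup_iff _ _).mp hQ) i) j
  have hcol : ∀ i j, ∑ k, Q k i * Q k j = if i = j then 1 else 0 := fun i j => by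
    simpa [mul_apply, one_apply] using
      congrFun (congrFun ((mem_orthogonalGroup_iff' _ _).mp hQ) i) j
  simp only [Fin.sum_univ_three, Fin.isValue] at hrow hcol
  have row0 := hrow 0 0
  have col0 := hcol 0 0
  simp only [if_true, h00] at row0 col0
  have h01 : Q 0 1 = 0 := by nlinarith
  have h02 : Q 0 2 = 0 := by nlinarith
  have h10 : Q 1 0 = 0 := by nlinarith
  have h20 : Q 2 0 = 0 := by nlinarith
  have hblock : !![Q 1 1, Q 1 2; Q 2 1, Q 2 2] ∈ specialOrthogonalGroup (Fin 2) ℝ := by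
    refine mem_specialOrthogonalGroup_iff.mpr ⟨(mem_orthogonalGroup_iff _ _).mpr ?_, ?_⟩
    · ext i j
      fin_cases i <;> fin_cases j <;>
        simp only [mul_apply, transpose_apply, Fin.sum_univ_two, one_fin_two, of_apply, cons_val',
          cons_val_zero, cons_val_one, cons_val_fin_one, Fin.isValue, Fin.zero_eta, Fin.mk_one] <;>
        grind
    · rw [det_fin_three, h01, h02, h10, h20, h00] at hdet
      rw [det_fin_two_of]; linarith
  obtain ⟨hd, hb, hnorm⟩ := of_mem_specialOrthogonalGroup_fin_two_iff.mp hblock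
  rw [hb, neg_sq] at hnorm
  obtain ⟨t, hc, hs⟩ := exists_cos_eq_and_sin_eq hnorm
  refine ⟨t, ?_⟩
  ext i j; fin_cases i <;> fin_cases j <;> simp [rotX, *]

/-- Euler angles: `rotX α * rotZ β` takes the first basis vector to the first column of `R`, and
what remains fixes it. -/
theorem exists_eq_rotX_mul_rotZ_mul_rotX {R : Matrix (Fin 3) (Fin 3) ℝ}
    (hR : R ∈ specialOrthogonalGroup (Fin 3) ℝ) :
    ∃ α β γ, R = rotX α * rotZ β * rotX γ := by
  have hcol : R 0 0 ^ 2 + R 1 0 ^ 2 + R 2 0 ^ 2 = 1 := by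
    simpa [mul_apply, Fin.sum_univ_three, sq] using
      congrFun (congrFun ((mem_orthogonalGroup_iff' _ _).mp hR.1) 0) 0
  obtain ⟨α, β, h0, h1, h2⟩ := exists_spherical_coords hcol
  set P := rotX α * rotZ β
  have hP : P ∈ specialOrthogonalGroup (Fin 3) ℝ :=
    mul_mem (rotX_mem_specialOrthogonalGroup α) (rotZ_mem_specialOrthogonalGroup β)
  have hPcol : ∀ i, P i 0 = R i 0 := by
    intro i; fin_cases i <;> simp [P, rotX, rotZ, *]
  have hQ : Pᵀ * R ∈ specialOrthogonalGroup (Fin 3) ℝ :=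
    mul_mem ⟨transpose_mem_unitaryGroup_iff.mpr hP.1, (det_transpose P).trans hP.2⟩ hR
  obtain ⟨γ, hγ⟩ := exists_eq_rotX_of_apply_zero_zero_eq_one hQ
    (by simpa [mul_apply, Fin.sum_univ_three, hPcol, sq] using hcol)
  refine ⟨α, β, γ, ?_⟩
  rw [← hγ, ← mul_assoc, (mem_orthogonalGroup_iff _ _).mp hP.1, one_mul]

def HopfCovers (g : Matrix (Fin 2) (Fin 2) ℂ) (R : Matrix (Fin 3) (Fin 3) ℝ) : Prop :=
  ∀ v, hopfF (g *ᵥ v) = R *ᵥ hopfF v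

theorem HopfCovers.mul {g h : Matrix (Fin 2) (Fin 2) ℂ} {R S : Matrix (Fin 3) (Fin 3) ℝ}
    (hg : HopfCovers g R) (hh : HopfCovers h S) : HopfCovers (g * h) (R * S) := fun v => by
  rw [← mulVec_mulVec, hg, hh, mulVec_mulVec]

noncomputable def liftRotX (t : ℝ) : Matrix (Fin 2) (Fin 2) ℂ :=
  !![cos (t / 2) - sin (t / 2) * Complex.I, 0; 0, cos (t / 2) + sin (t / 2) * Complex.I]

noncomputable def liftRotZ (t : ℝ) : Matrix (Fin 2) (Fin 2) ℂ :=
  !![cos (t / 2), -sin (t / 2); sin (t / 2), cos (t / 2)]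

/- In the lemmas below, generalizing `cos (t / 2)` and `sin (t / 2)` to real variables keeps
`simp` from pushing the casts to `ℂ` inside the trigonometric functions. -/

theorem liftRotX_mem_specialUnitaryGroup (t : ℝ) :
    liftRotX t ∈ specialUnitaryGroup (Fin 2) ℂ := by
  have h := sin_sq_add_cos_sq (t / 2)
  rw [mem_specialUnitaryGroup_iff, mem_unitaryGroup_iff, star_eq_conjTranspose, liftRotX]
  generalize cos (t / 2) = c, sin (t / 2) = s at *
  constructor
  · ext i j
    fin_cases i <;> fin_cases j <;>
      simp only [mul_apply, conjTranspose_apply, Fin.sum_univ_two, one_fin_two, of_apply,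
        cons_val', cons_val_zero, cons_val_one, cons_val_fin_one, Fin.isValue, Fin.zero_eta,
        Fin.mk_one, Complex.ext_iff, Complex.star_def, Complex.conj_re, Complex.conj_im,
        Complex.one_re, Complex.one_im, Complex.add_re, Complex.add_im, Complex.sub_re,
        Complex.sub_im, Complex.mul_re, Complex.mul_im, Complex.ofReal_re, Complex.ofReal_im,
        Complex.I_re, Complex.I_im, Complex.zero_re, Complex.zero_im] <;>
      grind
  · simp only [det_fin_two_of, Complex.ext_iff, Complex.one_re, Complex.one_im, Complex.add_re,
      Complex.add_im, Complex.sub_re, Complex.sub_im, Complex.mul_re, Complex.mul_im,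
      Complex.ofReal_re, Complex.ofReal_im, Complex.I_re, Complex.I_im, Complex.zero_re,
      Complex.zero_im]
    grind

theorem liftRotZ_mem_specialUnitaryGroup (t : ℝ) :
    liftRotZ t ∈ specialUnitaryGroup (Fin 2) ℂ := by
  have h := sin_sq_add_cos_sq (t / 2)
  rw [mem_specialUnitaryGroup_iff, mem_unitaryGroup_iff, star_eq_conjTranspose, liftRotZ]
  generalize cos (t / 2) = c, sin (t / 2) = s at *
  constructor
  · ext i j
    fin_cases i <;> fin_cases j <;>
      simp only [mul_apply, conjTranspose_apply, Fin.sum_univ_two, one_fin_two, of_apply,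
        cons_val', cons_val_zero, cons_val_one, cons_val_fin_one, Fin.isValue, Fin.zero_eta,
        Fin.mk_one, Complex.ext_iff, Complex.star_def, Complex.conj_re, Complex.conj_im,
        Complex.one_re, Complex.one_im, Complex.add_re, Complex.add_im, Complex.mul_re,
        Complex.mul_im, Complex.ofReal_re, Complex.ofReal_im, Complex.zero_re, Complex.zero_im,
        Complex.neg_re, Complex.neg_im] <;>
      grind
  · simp only [det_fin_two_of, Complex.ext_iff, Complex.one_re, Complex.one_im, Complex.sub_re,
      Complex.sub_im, Complex.mul_re, Complex.mul_im, Complex.ofReal_re, Complex.ofReal_im,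
      Complex.neg_re, Complex.neg_im]
    grind

theorem hopfCovers_liftRotX (t : ℝ) : HopfCovers (liftRotX t) (rotX t) := fun v => by
  have h := sin_sq_add_cos_sq (t / 2)
  rw [rotX, liftRotX, ← mul_div_cancel₀ t two_ne_zero, cos_two_mul', sin_two_mul,
    mul_div_cancel₀ _ two_ne_zero]
  generalize cos (t / 2) = c, sin (t / 2) = s at *
  ext i
  fin_cases i <;>
    simp only [hopfF, mulVec, dotProduct, Fin.sum_univ_two, Fin.sum_univ_three, of_apply,
      cons_val', cons_val_zero, cons_val_one, cons_val, cons_val_fin_one, Fin.isValue,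
      Fin.zero_eta, Fin.mk_one, Fin.reduceFinMk, Complex.sq_norm, Complex.normSq_apply,
      Complex.conj_re, Complex.conj_im, Complex.add_re, Complex.add_im, Complex.sub_re,
      Complex.sub_im, Complex.mul_re, Complex.mul_im, Complex.ofReal_re, Complex.ofReal_im,
      Complex.I_re, Complex.I_im, Complex.zero_re, Complex.zero_im] <;>
    grind

theorem hopfCovers_liftRotZ (t : ℝ) : HopfCovers (liftRotZ t) (rotZ t) := fun v => by
  have h := sin_sq_add_cos_sq (t / 2)
  rw [rotZ, liftRotZ, ← mul_div_cancel₀ t two_ne_zero, cos_two_mul', sin_two_mul,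
    mul_div_cancel₀ _ two_ne_zero]
  generalize cos (t / 2) = c, sin (t / 2) = s at *
  ext i
  fin_cases i <;>
    simp only [hopfF, mulVec, dotProduct, Fin.sum_univ_two, Fin.sum_univ_three, of_apply,
      cons_val', cons_val_zero, cons_val_one, cons_val, cons_val_fin_one, Fin.isValue,
      Fin.zero_eta, Fin.mk_one, Fin.reduceFinMk, Complex.sq_norm, Complex.normSq_apply,
      Complex.conj_re, Complex.conj_im, Complex.add_re, Complex.add_im, Complex.mul_re,
      Complex.mul_im, Complex.ofReal_re, Complex.ofReal_im, Complex.neg_re, Complex.neg_im] <;>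
    grind

/-- For each `R ∈ SO(3)` there is `g ∈ SU(2)` with `F(g·v) = R·(F v)` for all `v ∈ ℂ²`:
the covering `SU(2) → SO(3)` is surjective. -/
theorem hopfF_cover_surjective (R : Matrix (Fin 3) (Fin 3) ℝ)
    (hR : R.transpose * R = 1) (hdet : R.det = 1) :
    ∃ g : Matrix (Fin 2) (Fin 2) ℂ, g * g.conjTranspose = 1 ∧ g.det = 1 ∧
      ∀ v : Fin 2 → ℂ, hopfF (g.mulVec v) = R.mulVec (hopfF v) := by
  obtain ⟨α, β, γ, rfl⟩ := exists_eq_rotX_mul_rotZ_mul_rotX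
    (mem_specialOrthogonalGroup_iff.mpr ⟨(mem_orthogonalGroup_iff' _ _).mpr hR, hdet⟩)
  have hg : liftRotX α * liftRotZ β * liftRotX γ ∈ specialUnitaryGroup (Fin 2) ℂ :=
    mul_mem (mul_mem (liftRotX_mem_specialUnitaryGroup α) (liftRotZ_mem_specialUnitaryGroup β))
      (liftRotX_mem_specialUnitaryGroup γ)
  exact ⟨_, mem_unitaryGroup_iff.mp hg.1, hg.2,
    ((hopfCovers_liftRotX α).mul (hopfCovers_liftRotZ β)).mul (hopfCovers_liftRotX γ)⟩
end

section
/- Define F : ℂ² → ℝ³ by F(z,w) = (1/4)(|z|² − |w|², 2·Re(w·conj z), 2·Im(w·conj z)). Let A be a 2×n complex matrix such that A·A* is a real scalar multiple of the 2×2 identity matrix, and let C₁,…,Cₙ ∈ ℂ² be the columns of A. Then ∑_{i=1}^{n} F(Cᵢ) = 0; that is, the vectors F(C₁),…,F(Cₙ) are the edges of a closed n-gon in ℝ³. -/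
open scoped Matrix

/-- Reads `hopfF v` off the rank-one matrix `M = v v*`; being additive in `M`, it makes `∑ F(Cᵢ)`
a function of `A A* = ∑ Cᵢ Cᵢ*` alone. -/
noncomputable def hopfOfGram (M : Matrix (Fin 2) (Fin 2) ℂ) : Fin 3 → ℝ :=
  ![(M 0 0 - M 1 1).re / 4, (M 1 0).re / 2, (M 1 0).im / 2]

theorem sum_hopfF_columns {ι : Type*} [Fintype ι] (A : Matrix (Fin 2) ι ℂ) :
    ∑ i, hopfF (fun j => A j i) = hopfOfGram (A * Aᴴ) := by
  have gram (j k : Fin 2) : (A * Aᴴ) j k = ∑ i, A j i * starRingEnd ℂ (A k i) := by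
    simp [Matrix.mul_apply]
  funext c
  fin_cases c <;>
    simp only [hopfF, hopfOfGram, gram, Finset.sum_apply, ← Finset.sum_sub_distrib, Complex.re_sum,
      Complex.im_sum, Finset.sum_div] <;>
    refine Finset.sum_congr rfl fun i _ => ?_ <;>
    simp [Complex.sq_norm, Complex.normSq_apply] <;> ring

theorem hopfOfGram_smul_one (r : ℝ) : hopfOfGram ((r : ℂ) • 1) = 0 := by
  funext c
  fin_cases c <;> simp [hopfOfGram]

/-- If `A·A*` is a real scalar multiple of the identity, then the images under `F` of the
columns of `A` are the edges of a closed `n`-gon in `ℝ³`: they sum to zero. -/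
theorem hopfF_columns_close_up (n : ℕ) (A : Matrix (Fin 2) (Fin n) ℂ)
    (h : ∃ r : ℝ, A * A.conjTranspose = (r : ℂ) • 1) :
    ∑ i : Fin n, hopfF (fun j => A j i) = 0 := by
  obtain ⟨r, hr⟩ := h
  rw [sum_hopfF_columns, hr, hopfOfGram_smul_one]
end

section
/- Define F : ℂ² → ℝ³ by F(z,w) = (1/4)(|z|² − |w|², 2·Re(w·conj z), 2·Im(w·conj z)). For any vectors e₁,…,eₙ ∈ ℝ³ with e₁ + ⋯ + eₙ = 0, there exists a 2×n complex matrix A such that A·A* is a real scalar multiple of the 2×2 identity matrix and F(Cᵢ) = eᵢ for each i, where Cᵢ ∈ ℂ² is the i-th column of A. -/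
/-!
The Hopf map is onto, so every edge `eᵢ` lifts to some `Cᵢ ∈ ℂ²`. For any `v ∈ ℂ²` the Pauli
decomposition reads `v v* = ½(|z|² + |w|²) I + 2 σ(F v)`, with `σ` linear. Summing over the
columns of `A`, `A A* = Σ Cᵢ Cᵢ*` is a real multiple of `I` plus `2 σ(Σ F Cᵢ) = 2 σ(Σ eᵢ) = 0`.
-/

open Matrix Complex

theorem Matrix.mul_eq_sum_vecMulVec {m n p α : Type*} [Fintype n] [NonUnitalNonAssocSemiring α]
    (A : Matrix m n α) (B : Matrix n p α) : A * B = ∑ k, vecMulVec (fun i => A i k) (B k) := by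
  ext i j
  simp [mul_apply, vecMulVec_apply, Matrix.sum_apply]

/-- `x ↦ x₀ σ_z + x₁ σ_x + x₂ σ_y`. -/
def pauli : (Fin 3 → ℝ) →ₗ[ℝ] Matrix (Fin 2) (Fin 2) ℂ where
  toFun x := !![(x 0 : ℂ), x 1 - x 2 * I; x 1 + x 2 * I, -x 0]
  map_add' x y := by ext i j; fin_cases i <;> fin_cases j <;> simp [Complex.ext_iff] <;> ring
  map_smul' c x := by ext i j; fin_cases i <;> fin_cases j <;> simp [Complex.ext_iff]

theorem vecMulVec_self_star_eq (v : Fin 2 → ℂ) :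
    vecMulVec v (star v) =
      (((‖v 0‖ ^ 2 + ‖v 1‖ ^ 2) / 2 : ℝ) : ℂ) • 1 + (2 : ℂ) • pauli (hopfF v) := by
  ext i j
  fin_cases i <;> fin_cases j <;> apply Complex.ext <;>
    simp [vecMulVec_apply, pauli, hopfF, ← Complex.normSq_eq_norm_sq, Complex.normSq_apply] <;>
    ring

theorem mul_conjTranspose_eq_smul_one_add_pauli {ι : Type*} [Fintype ι]
    (A : Matrix (Fin 2) ι ℂ) :
    A * Aᴴ = ((∑ i, (‖A 0 i‖ ^ 2 + ‖A 1 i‖ ^ 2) / 2 : ℝ) : ℂ) • 1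
      + (2 : ℂ) • pauli (∑ i, hopfF fun j => A j i) := by
  have hcol : ∀ k, Aᴴ k = star fun j => A j k := fun k => rfl
  simp only [mul_eq_sum_vecMulVec, hcol, vecMulVec_self_star_eq, Finset.sum_add_distrib,
    ← Finset.sum_smul, ← Finset.smul_sum, ← map_sum, Complex.ofReal_sum]

theorem hopfF_ofReal_cons (a : ℝ) (w : ℂ) :
    hopfF ![(a : ℂ), w] = ![(a ^ 2 - ‖w‖ ^ 2) / 4, a * w.re / 2, a * w.im / 2] := by
  ext k
  fin_cases k <;> simp [hopfF] <;> ring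

theorem hopfF_surjective : Function.Surjective hopfF := by
  intro x
  obtain ⟨ρ, hρ, hρx⟩ : ∃ ρ : ℝ, 0 ≤ ρ ∧ ρ ^ 2 = x 0 ^ 2 + x 1 ^ 2 + x 2 ^ 2 :=
    ⟨_, Real.sqrt_nonneg _, Real.sq_sqrt (by positivity)⟩
  have hρ0 : 0 ≤ ρ + x 0 := by nlinarith [sq_nonneg (x 1), sq_nonneg (x 2)]
  rcases hρ0.eq_or_lt with hzero | hpos
  · have hx0 : x 0 ≤ 0 := by linarith
    have hx1 : x 1 = 0 := by nlinarith [sq_nonneg (x 1), sq_nonneg (x 2)]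
    have hx2 : x 2 = 0 := by nlinarith [sq_nonneg (x 1), sq_nonneg (x 2)]
    refine ⟨![((0 : ℝ) : ℂ), (√(-4 * x 0) : ℂ)], ?_⟩
    rw [hopfF_ofReal_cons, Complex.norm_real, Real.norm_eq_abs, sq_abs,
      Real.sq_sqrt (by linarith)]
    ext k; fin_cases k <;> simp [hx1, hx2]
  · set a := √(2 * (ρ + x 0))
    have ha2 : a ^ 2 = 2 * (ρ + x 0) := Real.sq_sqrt (by linarith)
    have ha0 : a ≠ 0 := by positivity
    refine ⟨![(a : ℂ), 2 * (x 1 + x 2 * I) / a], ?_⟩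
    rw [hopfF_ofReal_cons]
    ext k; fin_cases k
    · simp only [Fin.zero_eta, Matrix.cons_val_zero, norm_div, Complex.norm_mul,
        Complex.norm_ofNat, Complex.norm_real, Real.norm_eq_abs, div_pow, mul_pow, sq_abs,
        Complex.sq_norm, Complex.normSq_add_mul_I]
      field_simp
      linear_combination (a ^ 2 + 2 * ρ - 2 * x 0) * ha2 + 4 * hρx
    all_goals simp [ha0, mul_div_cancel₀]

/-- Every closed `n`-gon in `ℝ³` admits an imploded spin-framing: there is a `2×n` complex
matrix `A` with `A·A*` a real scalar multiple of the identity whose columns map to the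
given edges under `F`. -/
theorem closed_ngon_lifts (n : ℕ) (e : Fin n → Fin 3 → ℝ) (h : ∑ i, e i = 0) :
    ∃ A : Matrix (Fin 2) (Fin n) ℂ,
      (∃ r : ℝ, A * A.conjTranspose = (r : ℂ) • 1) ∧
        ∀ i, hopfF (fun j => A j i) = e i := by
  choose lift hlift using hopfF_surjective
  let A : Matrix (Fin 2) (Fin n) ℂ := Matrix.of fun j i => lift (e i) j
  have hcols : ∀ i, hopfF (fun j => A j i) = e i := fun i => hlift (e i)
  refine ⟨A, ⟨∑ i, (‖A 0 i‖ ^ 2 + ‖A 1 i‖ ^ 2) / 2, ?_⟩, hcols⟩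
  rw [mul_conjTranspose_eq_smul_one_add_pauli, Finset.sum_congr rfl fun i _ => hcols i, h,
    map_zero, smul_zero, add_zero]
end

section
/- Define F : ℂ² → ℝ³ by F(z,w) = (1/4)(|z|² − |w|², 2·Re(w·conj z), 2·Im(w·conj z)). Let A and A' be 2×n complex matrices with columns Cᵢ and C'ᵢ respectively, and suppose there exists a 2×2 complex matrix g with g·g* = 1 and det g = 1 such that F(C'ᵢ) = F(g·Cᵢ) for all i. Then there exists a diagonal n×n complex matrix t whose diagonal entries all have absolute value 1 such that A' = g·A·t. -/
/-!
Since `16 ‖F v‖² = ‖v‖⁴`, the value `F v` determines both `|v₀|²` and `|v₁|²`, hence the whole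
rank-one Hermitian matrix `v v*`; and `v v* = w w*` forces `v = c w` with `|c| = 1`, column by
column.
-/

open ComplexConjugate

theorem RCLike.exists_norm_eq_one_smul_of_mul_conj_eq {𝕜 ι : Type*} [RCLike 𝕜] {v w : ι → 𝕜}
    (h : ∀ i j, v i * conj (v j) = w i * conj (w j)) : ∃ c : 𝕜, ‖c‖ = 1 ∧ v = c • w := by
  have hnorm (i : ι) : ‖v i‖ = ‖w i‖ := by
    have := h i i
    rw [RCLike.mul_conj, RCLike.mul_conj] at this
    exact (sq_eq_sq₀ (norm_nonneg _) (norm_nonneg _)).mp (by exact_mod_cast this)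
  by_cases hw : w = 0
  · refine ⟨1, norm_one, funext fun i => ?_⟩
    simpa [hw] using hnorm i
  obtain ⟨k, hk⟩ : ∃ k, w k ≠ 0 := by simpa [funext_iff] using hw
  refine ⟨v k / w k, by rw [norm_div, hnorm, div_self (norm_ne_zero_iff.mpr hk)], funext fun i => ?_⟩
  have hcross : v i * w k = v k * w i := by
    refine mul_right_cancel₀ ((map_ne_zero conj).mpr hk) ?_
    calc v i * w k * conj (w k) = v i * (v k * conj (v k)) := by
          rw [mul_assoc, RCLike.mul_conj, RCLike.mul_conj, hnorm]
      _ = v k * (v i * conj (v k)) := by ring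
      _ = v k * w i * conj (w k) := by rw [h]; ring
  rw [Pi.smul_apply, smul_eq_mul, div_mul_eq_mul_div, eq_div_iff hk, hcross]

theorem eq_and_eq_of_sq_sub_sq_eq_of_mul_eq {a b c d : ℝ} (ha : 0 ≤ a) (hb : 0 ≤ b) (hc : 0 ≤ c)
    (hd : 0 ≤ d) (hsub : a ^ 2 - b ^ 2 = c ^ 2 - d ^ 2) (hmul : a * b = c * d) :
    a = c ∧ b = d := by
  have hadd : a ^ 2 + b ^ 2 = c ^ 2 + d ^ 2 := by
    refine (sq_eq_sq₀ (by positivity) (by positivity)).mp ?_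
    linear_combination (a ^ 2 - b ^ 2 + c ^ 2 - d ^ 2) * hsub + 4 * (a * b + c * d) * hmul
  exact ⟨(sq_eq_sq₀ ha hc).mp (by linarith), (sq_eq_sq₀ hb hd).mp (by linarith)⟩

theorem hopfF_eq_iff {v w : Fin 2 → ℂ} : hopfF v = hopfF w ↔
    ‖v 0‖ ^ 2 - ‖v 1‖ ^ 2 = ‖w 0‖ ^ 2 - ‖w 1‖ ^ 2 ∧ v 1 * conj (v 0) = w 1 * conj (w 0) := by
  simp [hopfF, funext_iff, Fin.forall_fin_succ, Complex.ext_iff]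

theorem mul_conj_eq_of_hopfF_eq {v w : Fin 2 → ℂ} (h : hopfF v = hopfF w) (i j : Fin 2) :
    v i * conj (v j) = w i * conj (w j) := by
  obtain ⟨hsub, hmul⟩ := hopfF_eq_iff.mp h
  obtain ⟨h0, h1⟩ := eq_and_eq_of_sq_sub_sq_eq_of_mul_eq (norm_nonneg (v 0)) (norm_nonneg (v 1))
    (norm_nonneg (w 0)) (norm_nonneg (w 1)) hsub (by simpa [mul_comm] using congrArg norm hmul)
  fin_cases i <;> fin_cases j
  · simp [RCLike.mul_conj, h0]
  · simpa [mul_comm] using congrArg conj hmul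
  · exact hmul
  · simp [RCLike.mul_conj, h1]

theorem framed_polygon_injectivity_general (n : ℕ) (A A' : Matrix (Fin 2) (Fin n) ℂ)
    (g : Matrix (Fin 2) (Fin 2) ℂ)
    (h : ∀ i : Fin n, hopfF (fun j => A' j i) = hopfF (g.mulVec fun j => A j i)) :
    ∃ d : Fin n → ℂ, (∀ i, ‖d i‖ = 1) ∧ A' = g * A * Matrix.diagonal d := by
  choose d hd hA' using fun i =>
    RCLike.exists_norm_eq_one_smul_of_mul_conj_eq (mul_conj_eq_of_hopfF_eq (h i))
  refine ⟨d, hd, Matrix.ext fun j i => ?_⟩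
  rw [Matrix.mul_diagonal, congrFun (hA' i) j, mul_comm]
  rfl

/-- If the columns of `A'` and of `g·A` (`g ∈ SU(2)`) have the same images under `F`,
then `A' = g·A·t` for a diagonal matrix `t` with unit-modulus diagonal entries. -/
theorem framed_polygon_injectivity (n : ℕ) (A A' : Matrix (Fin 2) (Fin n) ℂ)
    (g : Matrix (Fin 2) (Fin 2) ℂ) (hg : g * g.conjTranspose = 1) (hdet : g.det = 1)
    (h : ∀ i : Fin n, hopfF (fun j => A' j i) = hopfF (g.mulVec fun j => A j i)) :
    ∃ d : Fin n → ℂ, (∀ i, ‖d i‖ = 1) ∧ A' = g * A * Matrix.diagonal d :=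
  framed_polygon_injectivity_general n A A' g h
end

section
/- Let n ≥ 1 and let r₁,…,rₙ be real numbers. There exist vectors e₁,…,eₙ ∈ ℝ³ with e₁ + ⋯ + eₙ = 0 and ‖eᵢ‖ = rᵢ for every i if and only if rᵢ ≥ 0 for all i and 2·rᵢ ≤ r₁ + ⋯ + rₙ for all i. -/
/-!
Necessity is the triangle inequality. For sufficiency, take a set `A` of sides of maximal
cardinality whose total length is at most half the perimeter, a side `i ∉ A`, and the remaining
sides: each of these three groups has total length at most half the perimeter, so the three
group lengths are the sides of a triangle in a plane of `ℝ³`, and each side of that triangle is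
subdivided into parallel pieces of the prescribed lengths.
-/

open Finset Real

theorem two_mul_norm_le_sum_norm_of_sum_eq_zero {ι F : Type*} [SeminormedAddCommGroup F]
    {s : Finset ι} {e : ι → F} (h : ∑ j ∈ s, e j = 0) {i : ι} (hi : i ∈ s) :
    2 * ‖e i‖ ≤ ∑ j ∈ s, ‖e j‖ := by
  classical
  rw [← add_sum_erase s e hi] at h
  have : ‖e i‖ ≤ ∑ j ∈ s.erase i, ‖e j‖ := by
    rw [eq_neg_of_add_eq_zero_left h, norm_neg]
    exact norm_sum_le _ _
  rw [← add_sum_erase s _ hi]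
  linarith

section Triangle

variable {E : Type*} [NormedAddCommGroup E] [InnerProductSpace ℝ E] {x y : E}

theorem norm_cos_smul_add_sin_smul (hx : ‖x‖ = 1) (hy : ‖y‖ = 1) (hxy : inner ℝ x y = 0)
    (θ : ℝ) : ‖cos θ • x + sin θ • y‖ = 1 := by
  have : ‖cos θ • x + sin θ • y‖ ^ 2 = 1 := by
    rw [norm_add_sq_real, norm_smul, norm_smul, real_inner_smul_left, real_inner_smul_right,
      hxy, hx, hy]
    simp [cos_sq_add_sin_sq]
  exact (pow_eq_one_iff_of_nonneg (norm_nonneg _) two_ne_zero).1 this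

theorem exists_norm_eq_norm_eq_norm_add_eq (hx : ‖x‖ = 1) (hy : ‖y‖ = 1) (hxy : inner ℝ x y = 0)
    {a b c : ℝ} (ha : 0 ≤ a) (hb : 0 ≤ b) (hc : |a - b| ≤ c) (hc' : c ≤ a + b) :
    ∃ u v : E, ‖u‖ = a ∧ ‖v‖ = b ∧ ‖u + v‖ = c := by
  -- Rotate the second side from `b • x` (straight) to `-b • x` (folded back) and apply the IVT.
  set f : ℝ → ℝ := fun θ => ‖a • x + b • (cos θ • x + sin θ • y)‖
  have hf0 : f 0 = a + b := by
    simp [f, ← add_smul, norm_smul, hx, abs_of_nonneg (add_nonneg ha hb)]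
  have hfπ : f π = |a - b| := by simp [f, ← sub_eq_add_neg, ← sub_smul, norm_smul, hx]
  obtain ⟨θ, -, hθ⟩ := intermediate_value_Icc' pi_pos.le (by fun_prop : Continuous f).continuousOn
    ⟨hfπ ▸ hc, hf0 ▸ hc'⟩
  exact ⟨a • x, b • (cos θ • x + sin θ • y), by simp [norm_smul, hx, ha],
    by rw [norm_smul, norm_cos_smul_add_sin_smul hx hy hxy, mul_one, norm_of_nonneg hb], hθ⟩

theorem exists_fin_three_sum_eq_zero_of_two_mul_le_sum (hx : ‖x‖ = 1) (hy : ‖y‖ = 1)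
    (hxy : inner ℝ x y = 0) (s : Fin 3 → ℝ) (hs₀ : ∀ k, 0 ≤ s k) (hs : ∀ k, 2 * s k ≤ ∑ k, s k) :
    ∃ V : Fin 3 → E, ∑ k, V k = 0 ∧ ∀ k, ‖V k‖ = s k := by
  have h₀ := hs 0
  have h₁ := hs 1
  have h₂ := hs 2
  simp only [Fin.sum_univ_three] at h₀ h₁ h₂
  obtain ⟨u, v, hu, hv, huv⟩ := exists_norm_eq_norm_eq_norm_add_eq hx hy hxy (hs₀ 0) (hs₀ 1)
    (c := s 2) (abs_sub_le_iff.2 ⟨by linarith, by linarith⟩) (by linarith)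
  refine ⟨![u, v, -(u + v)], by simp [Fin.sum_univ_three], fun k => ?_⟩
  fin_cases k
  exacts [hu, hv, (norm_neg _).trans huv]

end Triangle

section Refinement

variable {ι E : Type*} [NormedAddCommGroup E] [NormedSpace ℝ E]

theorem sum_div_norm_smul_self (s : Finset ι) (r : ι → ℝ) (u : E) (h : ∑ j ∈ s, r j = ‖u‖) :
    ∑ j ∈ s, (r j / ‖u‖) • u = u := by
  rw [← sum_smul, ← sum_div, h]
  rcases eq_or_ne u 0 with rfl | hu
  · simp
  · rw [div_self (norm_ne_zero_iff.2 hu), one_smul]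

theorem norm_div_norm_smul_self {t : ℝ} (u : E) (ht₀ : 0 ≤ t) (ht : t ≤ ‖u‖) :
    ‖(t / ‖u‖) • u‖ = t := by
  rw [norm_smul, norm_div, norm_norm, norm_of_nonneg ht₀]
  rcases (norm_nonneg u).eq_or_lt with hu | hu
  · rw [← hu] at ht ⊢
    simp [le_antisymm ht ht₀]
  · exact div_mul_cancel₀ t hu.ne'

theorem exists_norm_eq_of_norm_eq_sum_fiber {κ : Type*} [Fintype ι] [Fintype κ] [DecidableEq κ]
    (G : ι → κ) (r : ι → ℝ) (hr : ∀ j, 0 ≤ r j) (V : κ → E)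
    (hV : ∀ k, ‖V k‖ = ∑ j with G j = k, r j) :
    ∃ e : ι → E, ∑ j, e j = ∑ k, V k ∧ ∀ j, ‖e j‖ = r j := by
  refine ⟨fun j => (r j / ‖V (G j)‖) • V (G j), ?_, fun j => ?_⟩
  · rw [← sum_fiberwise univ G]
    refine sum_congr rfl fun k _ => ?_
    rw [← sum_div_norm_smul_self _ r (V k) (hV k).symm]
    exact sum_congr rfl fun j hj => by rw [(mem_filter.1 hj).2]
  · refine norm_div_norm_smul_self _ (hr j) ?_
    rw [hV]
    exact single_le_sum (fun i _ => hr i) (mem_filter.2 ⟨mem_univ j, rfl⟩)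

end Refinement

theorem exists_sum_le_forall_lt_sum_add {ι : Type*} [Fintype ι] (r : ι → ℝ) {c : ℝ}
    (hc : 0 ≤ c) : ∃ A : Finset ι, ∑ j ∈ A, r j ≤ c ∧ ∀ i ∉ A, c < ∑ j ∈ A, r j + r i := by
  classical
  obtain ⟨A, hA, hmax⟩ := exists_max_image ({A | ∑ j ∈ A, r j ≤ c} : Finset (Finset ι)) card
    ⟨∅, by simpa using hc⟩
  rw [mem_filter_univ] at hA
  refine ⟨A, hA, fun i hi => lt_of_not_ge fun h => ?_⟩
  have := hmax (insert i A) (by rwa [mem_filter_univ, sum_insert hi, add_comm])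
  rw [card_insert_of_notMem hi] at this
  omega

theorem exists_fin_three_two_mul_sum_fiber_le {ι : Type*} [Fintype ι] (r : ι → ℝ)
    (hS : 0 ≤ ∑ j, r j) (hr : ∀ i, 2 * r i ≤ ∑ j, r j) :
    ∃ G : ι → Fin 3, ∀ k, 2 * ∑ j with G j = k, r j ≤ ∑ j, r j := by
  classical
  obtain ⟨A, hA, hAi⟩ := exists_sum_le_forall_lt_sum_add r (c := (∑ j, r j) / 2) (by linarith)
  by_cases hAu : ∀ i, i ∈ A
  · rw [eq_univ_iff_forall.2 hAu] at hA
    refine ⟨fun _ => 0, fun k => ?_⟩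
    fin_cases k <;> simp <;> linarith
  obtain ⟨i, hi⟩ := not_forall.1 hAu
  set G : ι → Fin 3 := fun j => if j ∈ A then 0 else if j = i then 1 else 2
  have hG₀ : ∑ j with G j = 0, r j = ∑ j ∈ A, r j := by
    congr 1
    ext j
    by_cases hj : j ∈ A <;> by_cases hji : j = i <;> simp [G, hj, hji]
  have hG₁ : ∑ j with G j = 1, r j = r i := by
    rw [← sum_singleton r i]
    congr 1
    ext j
    by_cases hj : j ∈ A <;> by_cases hji : j = i <;> simp_all [G]
  have hG := sum_fiberwise univ G r
  rw [Fin.sum_univ_three, hG₀, hG₁] at hG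
  refine ⟨G, fun k => ?_⟩
  fin_cases k <;> simp [hG₀, hG₁] <;> linarith [hr i, hAi i hi]

theorem closed_linkage_exists_iff_general (n : ℕ) (r : Fin n → ℝ) :
    (∃ e : Fin n → EuclideanSpace ℝ (Fin 3),
        (∑ i, e i = 0) ∧ ∀ i, ‖e i‖ = r i) ↔
      ((∀ i, 0 ≤ r i) ∧ ∀ i, 2 * r i ≤ ∑ j, r j) := by
  constructor
  · rintro ⟨e, he, hr⟩
    obtain rfl : (fun i => ‖e i‖) = r := funext hr
    exact ⟨fun i => norm_nonneg _,
      fun i => two_mul_norm_le_sum_norm_of_sum_eq_zero he (mem_univ i)⟩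
  · rintro ⟨hr₀, hr⟩
    obtain ⟨G, hG⟩ := exists_fin_three_two_mul_sum_fiber_le r (sum_nonneg fun j _ => hr₀ j) hr
    set s : Fin 3 → ℝ := fun k => ∑ j with G j = k, r j
    have hs : ∑ k, s k = ∑ j, r j := sum_fiberwise univ G r
    obtain ⟨V, hV, hVs⟩ := exists_fin_three_sum_eq_zero_of_two_mul_le_sum
      (x := EuclideanSpace.single (0 : Fin 3) (1 : ℝ)) (y := EuclideanSpace.single 1 1)
      (by simp) (by simp) (by simp [EuclideanSpace.inner_single_left]) s
      (fun k => sum_nonneg fun j _ => hr₀ j) (fun k => hs ▸ hG k)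
    obtain ⟨e, he, her⟩ := exists_norm_eq_of_norm_eq_sum_fiber G r hr₀ V hVs
    exact ⟨e, he.trans hV, her⟩

/-- A closed `n`-gon linkage in `ℝ³` with side lengths `r₁,…,rₙ` exists iff every `rᵢ` is
nonnegative and `2·rᵢ ≤ r₁ + ⋯ + rₙ` for every `i`. -/
theorem closed_linkage_exists_iff (n : ℕ) (hn : 1 ≤ n) (r : Fin n → ℝ) :
    (∃ e : Fin n → EuclideanSpace ℝ (Fin 3),
        (∑ i, e i = 0) ∧ ∀ i, ‖e i‖ = r i) ↔
      ((∀ i, 0 ≤ r i) ∧ ∀ i, 2 * r i ≤ ∑ j, r j) :=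
  closed_linkage_exists_iff_general n r
end

section
/- Let G be a finite simple graph that is a tree (connected and acyclic) in which every vertex has degree 1 or degree 3, and suppose G has at least one vertex of degree 3. Then there exists a vertex of degree 3 that is adjacent to at least two vertices of degree 1 (leaves). -/
/-- In a connected graph containing a vertex of degree `3`, two adjacent vertices
cannot both be leaves. -/
lemma no_adjacent_leaves {V : Type*} [Fintype V]
    (G : SimpleGraph V) [DecidableRel G.Adj]
    (hconn : G.Connected) (hex : ∃ v, G.degree v = 3)
    {v u : V} (hadj : G.Adj v u) (hv : G.degree v = 1) (hu : G.degree u = 1) :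
    False := by
  obtain ⟨x, hx⟩ := hex
  have key : ∀ (a w : V), (a = v ∨ a = u) → G.Walk a w → (w = v ∨ w = u) := by
    intro a w ha p
    induction p with
    | nil => exact ha
    | @cons a b w hab p ih =>
      apply ih
      rcases ha with ha | ha
      · subst ha
        right
        have hb : b ∈ G.neighborFinset a := by simpa using hab
        have hu' : u ∈ G.neighborFinset a := by simpa using hadj
        have hcard : (G.neighborFinset a).card ≤ 1 := by
          rw [G.card_neighborFinset_eq_degree, hv]
        exact Finset.card_le_one.mp hcard b hb u hu'
      · subst ha
        left
        have hb : b ∈ G.neighborFinset a := by simpa using hab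
        have hv' : v ∈ G.neighborFinset a := by simpa using hadj.symm
        have hcard : (G.neighborFinset a).card ≤ 1 := by
          rw [G.card_neighborFinset_eq_degree, hu]
        exact Finset.card_le_one.mp hcard b hb v hv'
  obtain ⟨p⟩ := hconn.preconnected v x
  rcases key v x (Or.inl rfl) p with h | h <;> subst h <;> omega

/-- Every finite trivalent tree (all degrees `1` or `3`) with at least one internal vertex
has an internal vertex adjacent to at least two leaves (a matched pair of leaves). -/
theorem trivalent_tree_has_matched_pair {V : Type*} [Fintype V]
    (G : SimpleGraph V) [DecidableRel G.Adj]
    (hT : G.IsTree) (hdeg : ∀ v, G.degree v = 1 ∨ G.degree v = 3)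
    (hex : ∃ v, G.degree v = 3) :
    ∃ v, G.degree v = 3 ∧
      2 ≤ ((G.neighborFinset v).filter (fun u => G.degree u = 1)).card := by
  classical
  -- leaves and internal vertices
  set L : Finset V := Finset.univ.filter (fun v => G.degree v = 1) with hL
  set I : Finset V := Finset.univ.filter (fun v => G.degree v ≠ 1) with hI
  -- counting: card L = card I + 2
  have hsum : ∑ v, G.degree v = 2 * G.edgeFinset.card :=
    G.sum_degrees_eq_twice_card_edges
  have hedges : G.edgeFinset.card + 1 = Fintype.card V := hT.card_edgeFinset
  have hsplit : ∑ v ∈ L, G.degree v + ∑ v ∈ I, G.degree v = ∑ v, G.degree v := by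
    rw [hL, hI]
    exact Finset.sum_filter_add_sum_filter_not _ _ _
  have hLsum : ∑ v ∈ L, G.degree v = L.card := by
    rw [Finset.sum_congr rfl (fun v hv => by
      simp only [hL, Finset.mem_filter] at hv; exact hv.2)]
    simp
  have hIsum : ∑ v ∈ I, G.degree v = 3 * I.card := by
    rw [Finset.sum_congr rfl (fun v hv => by
      simp only [hI, Finset.mem_filter] at hv
      rcases hdeg v with h | h
      · exact absurd h hv.2
      · exact h)]
    simp [Nat.mul_comm]
  have hcardV : L.card + I.card = Fintype.card V := by
    rw [hL, hI]
    exact Finset.card_filter_add_card_filter_not _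
  have hLI : L.card = I.card + 2 := by omega
  -- the map sending each leaf to its unique neighbor
  set f : V → V := fun v =>
    if h : (G.neighborFinset v).Nonempty then h.choose else v with hf
  have hfmem : ∀ v, G.degree v = 1 → f v ∈ G.neighborFinset v := by
    intro v hv
    have hne : (G.neighborFinset v).Nonempty := by
      rw [← Finset.card_pos, G.card_neighborFinset_eq_degree, hv]; norm_num
    simp only [hf, dif_pos hne]
    exact hne.choose_spec
  have hfuniq : ∀ v, G.degree v = 1 → ∀ u ∈ G.neighborFinset v, u = f v := by
    intro v hv u hu
    have hcard : (G.neighborFinset v).card ≤ 1 := by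
      rw [G.card_neighborFinset_eq_degree, hv]
    exact Finset.card_le_one.mp hcard u hu (f v) (hfmem v hv)
  -- f maps leaves to internal vertices
  have hmaps : ∀ v ∈ L, f v ∈ I := by
    intro v hv
    simp only [hL, Finset.mem_filter] at hv
    simp only [hI, Finset.mem_filter]
    refine ⟨Finset.mem_univ _, fun hfv1 => ?_⟩
    have hadj : G.Adj v (f v) := by
      have := hfmem v hv.2
      rwa [SimpleGraph.mem_neighborFinset] at this
    exact no_adjacent_leaves G hT.isConnected hex hadj hv.2 hfv1
  -- pigeonhole
  have hlt : I.card * 1 < L.card := by omega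
  obtain ⟨u, huI, hcard⟩ :=
    Finset.exists_lt_card_fiber_of_mul_lt_card_of_maps_to hmaps hlt
  simp only [hI, Finset.mem_filter] at huI
  have hu3 : G.degree u = 3 := (hdeg u).resolve_left huI.2
  refine ⟨u, hu3, ?_⟩
  have hsub : L.filter (fun v => f v = u) ⊆
      (G.neighborFinset u).filter (fun w => G.degree w = 1) := by
    intro v hv
    simp only [hL, Finset.mem_filter] at hv ⊢
    obtain ⟨⟨-, hv1⟩, hfv⟩ := hv
    have hadj : G.Adj v (f v) := by
      have := hfmem v hv1
      rwa [SimpleGraph.mem_neighborFinset] at this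
    rw [hfv] at hadj
    exact ⟨by rw [SimpleGraph.mem_neighborFinset]; exact hadj.symm, hv1⟩
  calc 2 ≤ (L.filter (fun v => f v = u)).card := hcard
    _ ≤ _ := Finset.card_le_card hsub
end

section
/- Let G be a finite simple graph that is a tree (connected and acyclic), with graph distance d. Let a, b, c, d₀ be vertices such that the unique path from a to b and the unique path from c to d₀ share at least one vertex; equivalently, there exists a vertex v with d(a,v) + d(v,b) = d(a,b) and d(c,v) + d(v,d₀) = d(c,d₀). Then d(a,b) + d(c,d₀) = max( d(a,c) + d(b,d₀), d(a,d₀) + d(b,c) ). -/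
/-!
If `v` lies on the geodesic from `x` to `y` in a tree, then for every `z` it lies on the geodesic
from `x` to `z` or on the one from `y` to `z`: cut the `x`–`y` path at its vertex `m` closest to
`z`; a geodesic from `z` to `m` meets the path only at `m`, so it prolongs either half to a path,
and paths in a tree are geodesics. Applied to a common vertex `v` of the geodesics `ab` and `cd`,
this puts `v` on the geodesics `ac` and `bd`, or on `ad` and `bc`. In the first case
`d(a,c) + d(b,d) = d(a,b) + d(c,d)`, and the triangle inequality through `v` bounds
`d(a,d) + d(b,c)` by the same sum.
-/

namespace SimpleGraph

variable {V : Type*} {G : SimpleGraph V}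

lemma dist_add_dist_eq_comm {x v y : V} :
    G.dist x v + G.dist v y = G.dist x y ↔ G.dist y v + G.dist v x = G.dist y x := by
  rw [dist_comm (u := x), dist_comm (u := v) (v := y), dist_comm (u := x) (v := y), add_comm]

namespace Walk

lemma IsPath.append {u v w : V} {p : G.Walk u v} {q : G.Walk v w} (hp : p.IsPath)
    (hq : q.IsPath) (h : ∀ x ∈ p.support, x ∈ q.support → x = v) : (p.append q).IsPath := by
  have hq' := hq.support_nodup
  rw [← cons_tail_support q, List.nodup_cons] at hq'
  rw [isPath_def, support_append, List.nodup_append]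
  refine ⟨hp.support_nodup, hq'.2, ?_⟩
  rintro x hx _ hx' rfl
  exact hq'.1 (h x hx (List.mem_of_mem_tail hx') ▸ hx')

lemma dist_add_dist_eq_of_mem_support {u v w : V} {p : G.Walk u v}
    (hp : p.length = G.dist u v) (hw : w ∈ p.support) :
    G.dist u w + G.dist w v = G.dist u v := by
  obtain ⟨q, r, rfl⟩ := mem_support_iff_exists_append.mp hw
  have := q.reachable.dist_triangle_left v
  have := dist_le q
  have := dist_le r
  rw [length_append] at hp
  omega

end Walk

open Walk

lemma IsAcyclic.length_eq_dist_of_isPath (hG : G.IsAcyclic) {u v : V} {p : G.Walk u v}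
    (hp : p.IsPath) : p.length = G.dist u v := by
  obtain ⟨q, hq, hlen⟩ := p.reachable.exists_path_of_dist
  rw [← hlen, Subtype.mk.inj ((hG.subsingleton_path u v).elim ⟨p, hp⟩ ⟨q, hq⟩)]

namespace IsTree

lemma dist_add_dist_eq_of_forall_dist_le (hG : G.IsTree) {u w z v : V} {r : G.Walk u w}
    (hr : r.IsPath) (hmin : ∀ x ∈ r.support, G.dist z u ≤ G.dist z x) (hv : v ∈ r.support) :
    G.dist w v + G.dist v z = G.dist w z := by
  obtain ⟨q, hq, hqlen⟩ := hG.connected.exists_path_of_dist z u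
  have hqr : (q.append r).IsPath := hq.append hr fun x hxq hxr => by
    have := dist_add_dist_eq_of_mem_support hqlen hxq
    have := hmin x hxr
    exact ((hG.connected.preconnected x u).dist_eq_zero_iff).mp (by omega)
  have hzw := hG.isAcyclic.length_eq_dist_of_isPath hqr
  rw [length_append, hqlen, hG.isAcyclic.length_eq_dist_of_isPath hr] at hzw
  have huvw := dist_add_dist_eq_of_mem_support (hG.isAcyclic.length_eq_dist_of_isPath hr) hv
  have := hG.connected.dist_triangle (u := z) (v := u) (w := v)
  have := hG.connected.dist_triangle (u := z) (v := v) (w := w)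
  rw [dist_add_dist_eq_comm]
  omega

lemma dist_add_dist_eq_or_dist_add_dist_eq (hG : G.IsTree) {x v y : V}
    (hv : G.dist x v + G.dist v y = G.dist x y) (z : V) :
    G.dist x v + G.dist v z = G.dist x z ∨ G.dist y v + G.dist v z = G.dist y z := by
  obtain ⟨p₁, hp₁⟩ := hG.connected.exists_walk_length_eq_dist x v
  obtain ⟨p₂, hp₂⟩ := hG.connected.exists_walk_length_eq_dist v y
  have hp : (p₁.append p₂).IsPath :=
    isPath_of_length_eq_dist _ (by rw [length_append, hp₁, hp₂, hv])
  obtain ⟨m, hm, hmin⟩ :=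
    Set.exists_min_image _ (G.dist z) (p₁.append p₂).support.finite_toSet
      ⟨x, start_mem_support _⟩
  obtain ⟨q, r, hq, hr, hqr⟩ := hp.mem_support_iff_exists_append.mp hm
  have hvqr : v ∈ (q.append r).support := by simp [← hqr]
  rw [mem_support_append_iff] at hvqr
  rcases hvqr with hvq | hvr
  · refine .inl (hG.dist_add_dist_eq_of_forall_dist_le hq.reverse (fun u hu => hmin u ?_) ?_)
    · simp_all
    · simpa using hvq
  · refine .inr (hG.dist_add_dist_eq_of_forall_dist_le hr (fun u hu => hmin u ?_) hvr)
    simp_all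

lemma dist_add_dist_eq_cross (hG : G.IsTree) {a b c d v : V}
    (hab : G.dist a v + G.dist v b = G.dist a b) (hcd : G.dist c v + G.dist v d = G.dist c d) :
    (G.dist a v + G.dist v c = G.dist a c ∧ G.dist b v + G.dist v d = G.dist b d) ∨
      (G.dist a v + G.dist v d = G.dist a d ∧ G.dist b v + G.dist v c = G.dist b c) := by
  rcases hG.dist_add_dist_eq_or_dist_add_dist_eq hab c with hac | hbc <;>
    rcases hG.dist_add_dist_eq_or_dist_add_dist_eq hab d with had | hbd
  · rcases hG.dist_add_dist_eq_or_dist_add_dist_eq hcd b with hcb | hdb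
    · exact .inr ⟨had, dist_add_dist_eq_comm.mp hcb⟩
    · exact .inl ⟨hac, dist_add_dist_eq_comm.mp hdb⟩
  · exact .inl ⟨hac, hbd⟩
  · exact .inr ⟨had, hbc⟩
  · rcases hG.dist_add_dist_eq_or_dist_add_dist_eq hcd a with hca | hda
    · exact .inl ⟨dist_add_dist_eq_comm.mp hca, hbd⟩
    · exact .inr ⟨dist_add_dist_eq_comm.mp hda, hbc⟩

end IsTree

lemma Connected.dist_add_dist_eq_max {a b c d v : V} (hG : G.Connected)
    (hab : G.dist a v + G.dist v b = G.dist a b) (hcd : G.dist c v + G.dist v d = G.dist c d)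
    (hac : G.dist a v + G.dist v c = G.dist a c) (hbd : G.dist b v + G.dist v d = G.dist b d) :
    G.dist a b + G.dist c d = max (G.dist a c + G.dist b d) (G.dist a d + G.dist b c) := by
  have had := hG.dist_triangle (u := a) (v := v) (w := d)
  have hbc := hG.dist_triangle (u := b) (v := v) (w := c)
  rw [dist_comm (u := v) (v := b)] at hab
  rw [dist_comm (u := c) (v := v)] at hcd
  omega

end SimpleGraph

theorem tree_four_point_equality_general {V : Type*} (G : SimpleGraph V)
    (hT : G.IsTree) (a b c d : V)
    (hmeet : ∃ v, G.dist a v + G.dist v b = G.dist a b ∧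
      G.dist c v + G.dist v d = G.dist c d) :
    G.dist a b + G.dist c d =
      max (G.dist a c + G.dist b d) (G.dist a d + G.dist b c) := by
  obtain ⟨v, hab, hcd⟩ := hmeet
  rcases hT.dist_add_dist_eq_cross hab hcd with ⟨hac, hbd⟩ | ⟨had, hbc⟩
  · exact hT.connected.dist_add_dist_eq_max hab hcd hac hbd
  · rw [SimpleGraph.dist_comm (u := c), max_comm]
    exact hT.connected.dist_add_dist_eq_max hab (SimpleGraph.dist_add_dist_eq_comm.mp hcd) had hbc

/-- In a finite tree, if the path from `a` to `b` and the path from `c` to `d` share a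
vertex, then `d(a,b) + d(c,d) = max(d(a,c) + d(b,d), d(a,d) + d(b,c))`. -/
theorem tree_four_point_equality {V : Type*} [Fintype V] (G : SimpleGraph V)
    (hT : G.IsTree) (a b c d : V)
    (hmeet : ∃ v, G.dist a v + G.dist v b = G.dist a b ∧
      G.dist c v + G.dist v d = G.dist c d) :
    G.dist a b + G.dist c d =
      max (G.dist a c + G.dist b d) (G.dist a d + G.dist b c) :=
  tree_four_point_equality_general G hT a b c d hmeet
end

section
/- Let a, b ∈ ℂⁿ. Then there exist Z, W ∈ ℂⁿ with ⟨Z,W⟩ = 0 and ‖Z‖ = ‖W‖ such that Z ∧ W = a ∧ b in the exterior algebra of ℂⁿ (equivalently, Z_i·W_j − Z_j·W_i = a_i·b_j − a_j·b_i for all i, j). -/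
/-! The Plücker coordinates of a pair `(a, b)` are unchanged by the Gram–Schmidt shear
`b ↦ b - c • a` and by the rescaling `(a, b) ↦ (t • a, t⁻¹ • b)`, both being changes of basis
of determinant one. Orthogonalize `b` against `a` first, then choose `t = √(‖b‖ / ‖a‖)` to
balance the norms; if either vector vanishes the bivector is zero and `Z = W = 0` works. -/

open scoped InnerProductSpace ComplexConjugate

section Plucker

variable {ι R : Type*} [CommRing R]

def plucker (x y : ι → R) (i j : ι) : R := x i * y j - x j * y i

theorem plucker_zero_left (y : ι → R) : plucker 0 y = 0 := by
  ext i j; simp [plucker]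

theorem plucker_zero_right (x : ι → R) : plucker x 0 = 0 := by
  ext i j; simp [plucker]

theorem plucker_sub_smul_right (x y : ι → R) (c : R) : plucker x (y - c • x) = plucker x y := by
  ext i j; simp only [plucker, Pi.sub_apply, Pi.smul_apply, smul_eq_mul]; ring

theorem plucker_smul_smul {s t : R} (hst : s * t = 1) (x y : ι → R) :
    plucker (s • x) (t • y) = plucker x y := by
  ext i j
  simp only [plucker, Pi.smul_apply, smul_eq_mul]
  linear_combination (x i * y j - x j * y i) * hst

end Plucker

section InnerProductSpace

variable {𝕜 E : Type*} [RCLike 𝕜] [NormedAddCommGroup E] [InnerProductSpace 𝕜 E]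

theorem inner_sub_smul_div_inner_self_eq_zero (x y : E) :
    ⟪x, y - (⟪x, y⟫_𝕜 / ⟪x, x⟫_𝕜) • x⟫_𝕜 = 0 := by
  rcases eq_or_ne x 0 with rfl | hx
  · simp
  rw [inner_sub_right, inner_smul_right, div_mul_cancel₀ _ (inner_self_ne_zero.mpr hx), sub_self]

theorem exists_norm_smul_eq_norm_inv_smul {x y : E} (hx : x ≠ 0) (hy : y ≠ 0) :
    ∃ t : 𝕜, t ≠ 0 ∧ ‖t • x‖ = ‖t⁻¹ • y‖ := by
  have hx' : 0 < ‖x‖ := norm_pos_iff.mpr hx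
  have hy' : 0 < ‖y‖ := norm_pos_iff.mpr hy
  set r := √(‖y‖ / ‖x‖)
  have hr : 0 < r := Real.sqrt_pos.mpr (div_pos hy' hx')
  refine ⟨r, RCLike.ofReal_ne_zero.mpr hr.ne', ?_⟩
  rw [norm_smul, norm_smul, norm_inv, RCLike.norm_ofReal, abs_of_pos hr,
    eq_inv_mul_iff_mul_eq₀ hr.ne', ← mul_assoc,
    Real.mul_self_sqrt (div_pos hy' hx').le, div_mul_cancel₀ _ hx'.ne']

end InnerProductSpace

theorem EuclideanSpace.sum_mul_conj_eq_inner {𝕜 ι : Type*} [RCLike 𝕜] [Fintype ι]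
    (v w : EuclideanSpace 𝕜 ι) : ∑ i, v i * conj (w i) = ⟪w, v⟫_𝕜 := by
  simp [PiLp.inner_apply, RCLike.inner_apply]

/-- Every decomposable bivector `a ∧ b` on `ℂⁿ` is represented by a pair `(Z, W)` of
orthogonal vectors of equal norm: `Z ∧ W = a ∧ b` (Plücker coordinates agree). -/
theorem decomposable_has_momentum_zero_rep (n : ℕ) (a b : Fin n → ℂ) :
    ∃ Z W : EuclideanSpace ℂ (Fin n),
      (∑ i, Z i * (starRingEnd ℂ) (W i)) = 0 ∧ ‖Z‖ = ‖W‖ ∧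
        ∀ i j, Z i * W j - Z j * W i = a i * b j - a j * b i := by
  set x : EuclideanSpace ℂ (Fin n) := WithLp.toLp 2 a
  set y : EuclideanSpace ℂ (Fin n) := WithLp.toLp 2 b - (⟪x, WithLp.toLp 2 b⟫_ℂ / ⟪x, x⟫_ℂ) • x
  have hxy : ⟪y, x⟫_ℂ = 0 :=
    inner_eq_zero_symm.mp (inner_sub_smul_div_inner_self_eq_zero (𝕜 := ℂ) _ _)
  have hplucker : plucker x.ofLp y.ofLp = plucker a b := plucker_sub_smul_right a b _
  suffices ∃ Z W : EuclideanSpace ℂ (Fin n), ⟪W, Z⟫_ℂ = 0 ∧ ‖Z‖ = ‖W‖ ∧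
      plucker Z.ofLp W.ofLp = plucker a b by
    obtain ⟨Z, W, horth, hnorm, hZW⟩ := this
    exact ⟨Z, W, by rw [EuclideanSpace.sum_mul_conj_eq_inner, horth], hnorm, congrFun₂ hZW⟩
  by_cases hdeg : x = 0 ∨ y = 0
  · refine ⟨0, 0, inner_zero_left _, rfl, ?_⟩
    rcases hdeg with h | h <;> simp [← hplucker, h, plucker_zero_left, plucker_zero_right]
  obtain ⟨hx, hy⟩ := not_or.mp hdeg
  obtain ⟨t, ht, hnorm⟩ := exists_norm_smul_eq_norm_inv_smul (𝕜 := ℂ) hx hy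
  refine ⟨t • x, t⁻¹ • y, ?_, hnorm, ?_⟩
  · rw [inner_smul_left, inner_smul_right, hxy, mul_zero, mul_zero]
  · simpa [WithLp.ofLp_smul] using
      (plucker_smul_smul (mul_inv_cancel₀ ht) x.ofLp y.ofLp).trans hplucker
end

section
/- Let Z, W, Z', W' ∈ ℂⁿ satisfy ⟨Z,W⟩ = 0, ‖Z‖ = ‖W‖, ⟨Z',W'⟩ = 0, ‖Z'‖ = ‖W'‖, and suppose Z ∧ W = Z' ∧ W' ≠ 0 in the exterior algebra of ℂⁿ (equivalently, Z_i·W_j − Z_j·W_i = Z'_i·W'_j − Z'_j·W'_i for all i, j, not all zero). Then there exists a 2×2 complex matrix g = [[g₁₁, g₁₂],[g₂₁, g₂₂]] with g·g* = 1 and det g = 1 such that Z' = g₁₁·Z + g₁₂·W and W' = g₂₁·Z + g₂₂·W. -/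
/-!
Equality of the nonzero wedges puts `Z'`, `W'` in the span of `Z`, `W`, with a coefficient matrix
`g` of determinant one (Cramer's rule at a nonvanishing Plücker coordinate). Momentum level zero
says that `M = (Z; W)` satisfies `M Mᴴ = ‖Z‖² • 1`, and likewise for `M' = g M`; hence `g gᴴ` is
the nonnegative multiple `‖Z'‖² / ‖Z‖²` of the identity, and `|det g|² = 1` forces it to be `1`.
-/

open Matrix

section Wedge

variable {R ι : Type*} [CommRing R]

def wedge (Z W : ι → R) (i j : ι) : R := Z i * W j - Z j * W i

theorem wedge_mul_wedge_sub_wedge_mul_wedge (Z W Z' W' : ι → R) (i j : ι) :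
    wedge Z' W i j * wedge Z W' i j - wedge Z Z' i j * wedge W' W i j =
      wedge Z W i j * wedge Z' W' i j := by
  unfold wedge; ring

variable {Z W Z' W' : ι → R}

/-- Cramer's rule: `Z' ∧ (Z ∧ W) = Z' ∧ Z' ∧ W' = 0`, and likewise for `W'`. -/
theorem mul_wedge_eq_of_wedge_eq (heq : ∀ i j, wedge Z W i j = wedge Z' W' i j) (i j k : ι) :
    Z' k * wedge Z W i j = wedge Z' W i j * Z k + wedge Z Z' i j * W k ∧
      W' k * wedge Z W i j = wedge W' W i j * Z k + wedge Z W' i j * W k := by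
  unfold wedge at *
  constructor
  · linear_combination Z' k * heq i j + Z' i * heq j k - Z' j * heq i k
  · linear_combination W' k * heq i j + W' i * heq j k - W' j * heq i k

end Wedge

theorem exists_det_eq_one_of_wedge_eq {K ι : Type*} [Field K] {Z W Z' W' : ι → K}
    (heq : ∀ i j, wedge Z W i j = wedge Z' W' i j) (hne : ∃ i j, wedge Z W i j ≠ 0) :
    ∃ g : Matrix (Fin 2) (Fin 2) K, g.det = 1 ∧ of ![Z', W'] = g * of ![Z, W] := by
  obtain ⟨i, j, hD⟩ := hne
  refine ⟨(wedge Z W i j)⁻¹ • !![wedge Z' W i j, wedge Z Z' i j; wedge W' W i j, wedge Z W' i j],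
    ?_, ?_⟩
  · rw [det_smul, det_fin_two_of, Fintype.card_fin, wedge_mul_wedge_sub_wedge_mul_wedge, ← heq,
      inv_pow, ← sq, inv_mul_cancel₀ (pow_ne_zero 2 hD)]
  · ext a k
    obtain ⟨hZ', hW'⟩ := mul_wedge_eq_of_wedge_eq heq i j k
    fin_cases a <;>
      simp only [Fin.zero_eta, Fin.mk_one, of_apply, cons_val_zero, cons_val_one, smul_of,
        smul_cons, smul_eq_mul, smul_empty, mul_apply, Fin.sum_univ_two] <;>
      field_simp
    · linear_combination hZ'
    · linear_combination hW'

section RCLike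

variable {𝕜 : Type*} [RCLike 𝕜]

theorem Matrix.mul_conjTranspose_eq_one_of_eq_smul_one {m : Type*} [Fintype m] [DecidableEq m]
    [Nonempty m] {g : Matrix m m 𝕜} (hdet : g.det = 1) {r : ℝ} (hr : 0 ≤ r)
    (h : g * gᴴ = (r : 𝕜) • 1) : g * gᴴ = 1 := by
  have hdet' : ((r ^ Fintype.card m : ℝ) : 𝕜) = 1 := by
    have := congrArg det h
    rwa [det_mul, det_conjTranspose, hdet, star_one, mul_one, det_smul, det_one, mul_one,
      eq_comm, ← RCLike.ofReal_pow] at this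
  have hr1 : r = 1 :=
    (pow_eq_one_iff_of_nonneg hr Fintype.card_ne_zero).1 (by exact_mod_cast hdet')
  rw [h, hr1, RCLike.ofReal_one, one_smul]

theorem Matrix.mul_conjTranspose_eq_div_smul_one {m ι : Type*} [Fintype m] [DecidableEq m]
    [Fintype ι] {M : Matrix m ι 𝕜} {g : Matrix m m 𝕜} {s t : ℝ} (hs : s ≠ 0)
    (hM : M * Mᴴ = (s : 𝕜) • 1) (hgM : (g * M) * (g * M)ᴴ = (t : 𝕜) • 1) :
    g * gᴴ = ((t / s : ℝ) : 𝕜) • 1 := by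
  have hsgg : (s : 𝕜) • (g * gᴴ) = (t : 𝕜) • 1 := by
    rw [← hgM, conjTranspose_mul, Matrix.mul_assoc, ← Matrix.mul_assoc M, hM]
    simp
  rw [RCLike.ofReal_div, div_eq_inv_mul, mul_smul, ← hsgg, smul_smul,
    inv_mul_cancel₀ (by exact_mod_cast hs), one_smul]

namespace EuclideanSpace

variable {ι : Type*} [Fintype ι]

theorem sum_mul_conj_self (Z : EuclideanSpace 𝕜 ι) :
    ∑ i, Z i * (starRingEnd 𝕜) (Z i) = ((‖Z‖ ^ 2 : ℝ) : 𝕜) := by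
  simp [RCLike.mul_conj, EuclideanSpace.norm_sq_eq]

theorem rows_mul_conjTranspose_eq_smul_one {Z W : EuclideanSpace 𝕜 ι}
    (horth : ∑ i, Z i * (starRingEnd 𝕜) (W i) = 0) (hnorm : ‖Z‖ = ‖W‖) :
    of ![Z.ofLp, W.ofLp] * (of ![Z.ofLp, W.ofLp])ᴴ = ((‖Z‖ ^ 2 : ℝ) : 𝕜) • 1 := by
  have horth' : ∑ i, W i * (starRingEnd 𝕜) (Z i) = 0 := by
    simpa [mul_comm] using congrArg (starRingEnd 𝕜) horth
  ext a b
  fin_cases a <;> fin_cases b <;>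
    simp [mul_apply, horth, horth', sum_mul_conj_self, hnorm]

end EuclideanSpace

end RCLike

/-- Two momentum-level-zero pairs `(Z,W)` and `(Z',W')` (orthogonal rows of equal norm)
with the same nonzero wedge `Z ∧ W = Z' ∧ W'` lie in the same `SU(2)`-orbit. -/
theorem momentum_zero_same_wedge_SU2_orbit (n : ℕ)
    (Z W Z' W' : EuclideanSpace ℂ (Fin n))
    (h1 : (∑ i, Z i * (starRingEnd ℂ) (W i)) = 0) (h2 : ‖Z‖ = ‖W‖)
    (h3 : (∑ i, Z' i * (starRingEnd ℂ) (W' i)) = 0) (h4 : ‖Z'‖ = ‖W'‖)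
    (heq : ∀ i j, Z i * W j - Z j * W i = Z' i * W' j - Z' j * W' i)
    (hne : ∃ i j, Z i * W j - Z j * W i ≠ 0) :
    ∃ g : Matrix (Fin 2) (Fin 2) ℂ, g * g.conjTranspose = 1 ∧ g.det = 1 ∧
      (∀ i, Z' i = g 0 0 * Z i + g 0 1 * W i) ∧
      (∀ i, W' i = g 1 0 * Z i + g 1 1 * W i) := by
  obtain ⟨g, hdet, hg⟩ := exists_det_eq_one_of_wedge_eq heq hne
  have hZ : Z ≠ 0 := by
    rintro rfl
    simp at hne
  have hgg := mul_conjTranspose_eq_div_smul_one (pow_ne_zero 2 (norm_ne_zero_iff.2 hZ))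
    (EuclideanSpace.rows_mul_conjTranspose_eq_smul_one h1 h2)
    (hg ▸ EuclideanSpace.rows_mul_conjTranspose_eq_smul_one h3 h4)
  refine ⟨g, mul_conjTranspose_eq_one_of_eq_smul_one hdet (by positivity) hgg, hdet,
    fun k => ?_, fun k => ?_⟩
  · simpa [mul_apply, Fin.sum_univ_two] using congrFun (congrFun hg 0) k
  · simpa [mul_apply, Fin.sum_univ_two] using congrFun (congrFun hg 1) k
end
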